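/- arXiv:2307.03868 — 2 statements merged into one kernel-verified Lean document; each statement's English description precedes it below -/
import Mathlib

section
/- If V₁ and V₂ agree on X₁ ∩ X₂ and each V_i is L_i-Lipschitz, then the piecewise function V on X₁ ∪ X₂ defined by V = V_i on X_i is Lipschitz with constant max(L₁, L₂), provided X₁ and X₂ are convex and X₁ ∪ X₂ is convex. -/
lemma key_mixed {n : ℕ} (X₁ X₂ : Set (Fin n → ℝ))
    (hX₁c : IsClosed X₁) (hX₂c : IsClosed X₂)
    (hU : Convex ℝ (X₁ ∪ X₂))
    (V₁ V₂ : (Fin n → ℝ) → ℝ) (L₁ L₂ : NNReal)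
    (hL₁ : LipschitzOnWith L₁ V₁ X₁) (hL₂ : LipschitzOnWith L₂ V₂ X₂)
    (hagree : ∀ x ∈ X₁ ∩ X₂, V₁ x = V₂ x)
    (V : (Fin n → ℝ) → ℝ)
    (hV₁ : ∀ x ∈ X₁, V x = V₁ x)
    (hV₂ : ∀ x ∈ X₂, V x = V₂ x)
    {x y : Fin n → ℝ} (hx : x ∈ X₁) (hy : y ∈ X₂) :
    dist (V x) (V y) ≤ (max L₁ L₂ : NNReal) * dist x y := by
  have hseg : segment ℝ x y ⊆ X₁ ∪ X₂ := hU.segment_subset (Or.inl hx) (Or.inr hy)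
  have hpre : IsPreconnected (segment ℝ x y) := (convex_segment x y).isPreconnected
  obtain ⟨z, hzseg, hz1, hz2⟩ := isPreconnected_closed_iff.1 hpre X₁ X₂ hX₁c hX₂c hseg
    ⟨x, left_mem_segment ℝ x y, hx⟩ ⟨y, right_mem_segment ℝ x y, hy⟩
  have hd : dist x z + dist z y = dist x y := dist_add_dist_of_mem_segment hzseg
  have h1 : dist (V x) (V z) ≤ (L₁ : ℝ) * dist x z := by
    rw [hV₁ x hx, hV₁ z hz1]
    exact (lipschitzOnWith_iff_dist_le_mul.mp hL₁) x hx z hz1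
  have h2 : dist (V z) (V y) ≤ (L₂ : ℝ) * dist z y := by
    rw [hV₂ y hy, hV₂ z hz2]
    exact (lipschitzOnWith_iff_dist_le_mul.mp hL₂) z hz2 y hy
  have hm1 : (L₁ : ℝ) ≤ (max L₁ L₂ : NNReal) := by
    exact_mod_cast le_max_left L₁ L₂
  have hm2 : (L₂ : ℝ) ≤ (max L₁ L₂ : NNReal) := by
    exact_mod_cast le_max_right L₁ L₂
  have e1 : (L₁ : ℝ) * dist x z ≤ (max L₁ L₂ : NNReal) * dist x z :=
    mul_le_mul_of_nonneg_right hm1 dist_nonneg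
  have e2 : (L₂ : ℝ) * dist z y ≤ (max L₁ L₂ : NNReal) * dist z y :=
    mul_le_mul_of_nonneg_right hm2 dist_nonneg
  have hmul : ((max L₁ L₂ : NNReal) : ℝ) * dist x z + (max L₁ L₂ : NNReal) * dist z y
      = (max L₁ L₂ : NNReal) * dist x y := by rw [← hd]; ring
  linarith [dist_triangle (V x) (V z) (V y)]

/-- If `V₁` and `V₂` agree on `X₁ ∩ X₂`, each `Vᵢ` is `Lᵢ`-Lipschitz on the
closed convex set `Xᵢ`, and the union `X₁ ∪ X₂` is convex, then the piecewise
function `V = Vᵢ on Xᵢ` is Lipschitz on `X₁ ∪ X₂` with constant `max L₁ L₂`. -/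
theorem piecewise_lipschitzOnWith {n : ℕ} (X₁ X₂ : Set (Fin n → ℝ))
    (hX₁c : IsClosed X₁) (hX₂c : IsClosed X₂)
    (hX₁ : Convex ℝ X₁) (hX₂ : Convex ℝ X₂)
    (hU : Convex ℝ (X₁ ∪ X₂))
    (V₁ V₂ : (Fin n → ℝ) → ℝ) (L₁ L₂ : NNReal)
    (hL₁ : LipschitzOnWith L₁ V₁ X₁) (hL₂ : LipschitzOnWith L₂ V₂ X₂)
    (hagree : ∀ x ∈ X₁ ∩ X₂, V₁ x = V₂ x)
    (V : (Fin n → ℝ) → ℝ)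
    (hV₁ : ∀ x ∈ X₁, V x = V₁ x)
    (hV₂ : ∀ x ∈ X₂, V x = V₂ x) :
    LipschitzOnWith (max L₁ L₂) V (X₁ ∪ X₂) := by
  rw [lipschitzOnWith_iff_dist_le_mul]
  intro x hx y hy
  have hm1 : (L₁ : ℝ) ≤ (max L₁ L₂ : NNReal) := by exact_mod_cast le_max_left L₁ L₂
  have hm2 : (L₂ : ℝ) ≤ (max L₁ L₂ : NNReal) := by exact_mod_cast le_max_right L₁ L₂
  rcases hx with hx1 | hx2 <;> rcases hy with hy1 | hy2
  · rw [hV₁ x hx1, hV₁ y hy1]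
    exact le_trans ((lipschitzOnWith_iff_dist_le_mul.mp hL₁) x hx1 y hy1)
      (mul_le_mul_of_nonneg_right hm1 dist_nonneg)
  · exact key_mixed X₁ X₂ hX₁c hX₂c hU V₁ V₂ L₁ L₂ hL₁ hL₂ hagree V hV₁ hV₂ hx1 hy2
  · rw [dist_comm x y, dist_comm (V x) (V y)]
    exact key_mixed X₁ X₂ hX₁c hX₂c hU V₁ V₂ L₁ L₂ hL₁ hL₂ hagree V hV₁ hV₂ hy1 hx2
  · rw [hV₂ x hx2, hV₂ y hy2]
    exact le_trans ((lipschitzOnWith_iff_dist_le_mul.mp hL₂) x hx2 y hy2)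
      (mul_le_mul_of_nonneg_right hm2 dist_nonneg)
end

section
/- Suppose V : D → ℝ is continuous on an open set D ⊆ ℝⁿ containing 0, V(0) = 0, V(x) > 0 for x ≠ 0, and along every solution x(t) of ẋ = f(x) with x(t) ≠ 0, V(x(t)) is strictly decreasing (V is continuously differentiable off a measure-zero set and its Dini/Clarke derivative along f is negative). Then the origin is an asymptotically stable equilibrium of ẋ = f(x), assuming f(0) = 0 and f is locally Lipschitz. -/
open Filter Topology Set Metric

/-!
`V` is nonincreasing along solutions: it decreases strictly while the solution is away from `0`,
and if it rose from the value `V 0 = 0`, by the intermediate value theorem it would pass through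
a positive value, from which it has to decrease. Stability follows since `V` has a positive minimum on a small
sphere but is smaller than that near `0`. For attractivity, `V (x t)` decreases to some `c ≥ 0`.
The shifted solutions `x (s + ·)` stay in a compact ball and are equi-Lipschitz, so along an
ultrafilter they converge pointwise to a solution `y`, on which `V ≡ c`; strict decrease along
`y` forces `c = 0`, and by compactness `V (x t) → 0` forces `x t → 0`.
-/

lemma antitoneOn_of_lt_of_ne_zero {I : Set ℝ} [I.OrdConnected] {g : ℝ → ℝ}
    (hg : ContinuousOn g I) (hlt : ∀ s ∈ I, ∀ t ∈ I, s < t → g s ≠ 0 → g t < g s) :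
    AntitoneOn g I := by
  intro s hs t ht hst
  rcases hst.eq_or_lt with rfl | hst
  · exact le_rfl
  by_cases hs0 : g s = 0
  swap
  · exact (hlt s hs t ht hst hs0).le
  by_contra! hgt
  rw [hs0] at hgt
  obtain ⟨τ, hτ, hgτ⟩ := intermediate_value_Icc hst.le (hg.mono (I.Icc_subset hs ht))
    (show g t / 2 ∈ Icc (g s) (g t) from ⟨by linarith, by linarith⟩)
  have hτt : τ < t := hτ.2.lt_of_ne fun h => by subst h; linarith
  have := hlt τ (I.Icc_subset hs ht hτ) t ht hτt (by linarith)
  linarith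

lemma AntitoneOn.tendsto_atTop_ciInf_Ici {α : Type*} [Preorder α] [IsDirectedOrder α]
    [NoMaxOrder α] {g : α → ℝ} {a : α} (hg : AntitoneOn g (Ici a))
    (hbdd : BddBelow (range fun t : Ici a => g t)) :
    Tendsto g atTop (𝓝 (⨅ t : Ici a, g t)) :=
  tendsto_comp_val_Ici_atTop.mp (tendsto_atTop_ciInf (fun s t hst => hg s.2 t.2 hst) hbdd)

lemma tendsto_of_tendsto_comp_zero_of_isCompact {X α : Type*} [TopologicalSpace X] {K : Set X}
    (hK : IsCompact K) {V : X → ℝ} (hV : ContinuousOn V K) {p : X}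
    (hpos : ∀ y ∈ K, y ≠ p → 0 < V y) {l : Filter α} {x : α → X} (hxK : ∀ᶠ a in l, x a ∈ K)
    (hVx : Tendsto (fun a => V (x a)) l (𝓝 0)) : Tendsto x l (𝓝 p) := by
  rw [_root_.tendsto_nhds]
  intro U hU hpU
  obtain ⟨m, hm, hmV⟩ := (hK.diff hU).exists_forall_le' (hV.mono sdiff_subset)
    fun y hy => hpos y hy.1 fun h => hy.2 (h ▸ hpU)
  filter_upwards [hxK, hVx (Iio_mem_nhds hm)] with a haK haV
  by_contra haU
  exact (hmV _ ⟨haK, haU⟩).not_gt haV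

section Solutions

variable {E : Type*} [NormedAddCommGroup E] [NormedSpace ℝ E]

lemma norm_sub_sub_smul_le_of_norm_hasDerivWithinAt_sub_le {x x' : ℝ → E} {v : E} {a b ε : ℝ}
    (hx : ∀ σ ∈ uIcc a b, HasDerivWithinAt x (x' σ) (uIcc a b) σ)
    (hε : ∀ σ ∈ uIcc a b, ‖x' σ - v‖ ≤ ε) :
    ‖x b - x a - (b - a) • v‖ ≤ ε * ‖b - a‖ := by
  have hz : ∀ σ ∈ uIcc a b,
      HasDerivWithinAt (fun σ => x σ - σ • v) (x' σ - v) (uIcc a b) σ := fun σ hσ =>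
    (hx σ hσ).sub (by simpa using ((hasDerivAt_id σ).smul_const v).hasDerivWithinAt)
  have := (convex_uIcc a b).norm_image_sub_le_of_norm_hasDerivWithin_le hz hε
    left_mem_uIcc right_mem_uIcc
  convert this using 2
  module

lemma hasDerivAt_of_tendsto_solutions {ι : Type*} {l : Filter ι} [l.NeBot] {K : Set E}
    {f : E → E} {M : ℝ} (hf : ContinuousOn f K) (hM : ∀ z ∈ K, ‖f z‖ ≤ M) {x : ι → ℝ → E}
    {y : ℝ → E} (hxK : ∀ a, ∀ᶠ k in l, ∀ σ, a ≤ σ → x k σ ∈ K)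
    (hx' : ∀ a, ∀ᶠ k in l, ∀ σ, a ≤ σ → HasDerivAt (x k) (f (x k σ)) σ)
    (hxy : ∀ τ, Tendsto (fun k => x k τ) l (𝓝 (y τ))) (hyK : ∀ τ, y τ ∈ K) (τ : ℝ) :
    HasDerivAt y (f (y τ)) τ := by
  rw [hasDerivAt_iff_isLittleO, Asymptotics.isLittleO_iff]
  intro ε hε
  obtain ⟨η, hη, hfη⟩ := Metric.continuousWithinAt_iff.mp (hf _ (hyK τ)) ε hε
  have hM0 : 0 ≤ M := (norm_nonneg _).trans (hM _ (hyK τ))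
  have hsmall : ∀ᶠ w in 𝓝 τ, M * ‖w - τ‖ < η / 2 := by
    have : Tendsto (fun w => M * ‖w - τ‖) (𝓝 τ) (𝓝 0) :=
      Continuous.tendsto' (by fun_prop) τ 0 (by simp)
    exact this.eventually (gt_mem_nhds (half_pos hη))
  filter_upwards [hsmall] with w hw
  have key : ∀ᶠ k in l, ‖x k w - x k τ - (w - τ) • f (y τ)‖ ≤ ε * ‖w - τ‖ := by
    filter_upwards [hxK (min τ w), hx' (min τ w), hxy τ (ball_mem_nhds _ (half_pos hη))]
      with k hkK hk' hkτ
    have hsol : ∀ σ ∈ uIcc τ w, HasDerivWithinAt (x k) (f (x k σ)) (uIcc τ w) σ :=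
      fun σ hσ => (hk' σ hσ.1).hasDerivWithinAt
    refine norm_sub_sub_smul_le_of_norm_hasDerivWithinAt_sub_le hsol fun σ hσ => ?_
    have hdrift : dist (x k σ) (x k τ) < η / 2 := by
      rw [dist_eq_norm]
      calc ‖x k σ - x k τ‖ ≤ M * ‖σ - τ‖ :=
            (convex_uIcc τ w).norm_image_sub_le_of_norm_hasDerivWithin_le hsol
              (fun σ' hσ' => hM _ (hkK σ' hσ'.1)) left_mem_uIcc hσ
        _ ≤ M * ‖w - τ‖ := by
            gcongr
            exact abs_sub_left_of_mem_uIcc hσ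
        _ < η / 2 := hw
    have hclose : dist (x k σ) (y τ) < η := by
      linarith [dist_triangle (x k σ) (x k τ) (y τ), mem_ball.mp hkτ]
    simpa [dist_eq_norm] using (hfη (hkK σ hσ.1) hclose).le
  exact le_of_tendsto (((hxy w).sub (hxy τ)).sub tendsto_const_nhds).norm key

lemma exists_tendsto_shift_solution {K : Set E} (hK : IsCompact K) {f : E → E}
    (hf : ContinuousOn f K) {x : ℝ → E} (hxK : ∀ t, 0 ≤ t → x t ∈ K)
    (hx' : ∀ t, 0 ≤ t → HasDerivAt x (f (x t)) t) (l : Ultrafilter ℝ)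
    (hl : (l : Filter ℝ) ≤ atTop) :
    ∃ y : ℝ → E, (∀ τ, y τ ∈ K) ∧ (∀ τ, Tendsto (fun s => x (s + τ)) (l : Filter ℝ) (𝓝 (y τ))) ∧
      ∀ τ, HasDerivAt y (f (y τ)) τ := by
  have hpos : ∀ a, ∀ᶠ s in (l : Filter ℝ), ∀ σ, a ≤ σ → 0 ≤ s + σ := fun a =>
    ((eventually_ge_atTop (-a)).filter_mono hl).mono fun s hs σ hσ => by linarith
  have hlim : ∀ τ, ∃ z ∈ K, Tendsto (fun s => x (s + τ)) (l : Filter ℝ) (𝓝 z) := fun τ =>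
    hK.ultrafilter_le_nhds (l.map _)
      (le_principal_iff.mpr ((hpos τ).mono fun s hs => hxK _ (hs τ le_rfl)))
  choose y hyK hxy using hlim
  obtain ⟨M, hM⟩ := hK.exists_bound_of_continuousOn hf
  refine ⟨y, hyK, hxy, hasDerivAt_of_tendsto_solutions (x := fun s σ => x (s + σ)) hf hM
    (fun a => (hpos a).mono fun s hs σ hσ => hxK _ (hs σ hσ))
    (fun a => (hpos a).mono fun s hs σ hσ => (hx' _ (hs σ hσ)).comp_const_add s σ) hxy hyK⟩

end Solutions

lemma exists_forall_norm_lt_of_antitoneOn {E : Type*} [NormedAddCommGroup E] [ProperSpace E]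
    {V : E → ℝ} {ρ : ℝ} (hρ : 0 < ρ) (hV : ContinuousAt V 0) (hV0 : V 0 = 0) (hVs : ContinuousOn V (sphere 0 ρ))
    (hVpos : ∀ y ∈ sphere (0 : E) ρ, 0 < V y) :
    ∃ δ > 0, ∀ x : ℝ → E, ContinuousOn x (Ici 0) → AntitoneOn (fun t => V (x t)) (Ici 0) →
      ‖x 0‖ < δ → ∀ t, 0 ≤ t → ‖x t‖ < ρ := by
  obtain ⟨m, hm, hmV⟩ := (isCompact_sphere (0 : E) ρ).exists_forall_le' hVs hVpos
  obtain ⟨δ, hδ, hVδ⟩ := Metric.eventually_nhds_iff.mp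
    (hV.eventually (gt_mem_nhds (show V 0 < m by rwa [hV0])))
  refine ⟨min δ ρ, lt_min hδ hρ, fun x hx hVx hx0 t ht => ?_⟩
  by_contra! hge
  obtain ⟨τ, hτ, hxτ⟩ := intermediate_value_Icc ht (hx.norm.mono Icc_subset_Ici_self)
    (show ρ ∈ Icc ‖x 0‖ ‖x t‖ from ⟨(hx0.trans_le (min_le_right _ _)).le, hge⟩)
  have hVτ : m ≤ V (x τ) := hmV _ (mem_sphere_zero_iff_norm.mpr hxτ)
  have hVx0 : V (x 0) < m := hVδ (by rw [dist_zero_right]; exact hx0.trans_le (min_le_left _ _))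
  linarith [hVx self_mem_Ici hτ.1 hτ.1]

section Lyapunov

variable {E : Type*} [NormedAddCommGroup E] [NormedSpace ℝ E] {D : Set E} {f : E → E}
  {V : E → ℝ}

def StrictAntiAlongSolutions (f : E → E) (D : Set E) (V : E → ℝ) : Prop :=
  ∀ x : ℝ → E, (∀ t, 0 ≤ t → x t ∈ D) → (∀ t, 0 ≤ t → HasDerivAt x (f (x t)) t) →
    ∀ s t, 0 ≤ s → s < t → x s ≠ 0 → V (x t) < V (x s)

lemma antitoneOn_of_strictAntiAlongSolutions (hD : IsOpen D) (hVc : ContinuousOn V D)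
    (hV0 : V 0 = 0) (hdec : StrictAntiAlongSolutions f D V) {x : ℝ → E}
    (hxD : ∀ t, 0 ≤ t → x t ∈ D) (hx' : ∀ t, 0 ≤ t → HasDerivAt x (f (x t)) t) :
    AntitoneOn (fun t => V (x t)) (Ici 0) :=
  antitoneOn_of_lt_of_ne_zero
    (fun t ht => ((hVc.continuousAt (hD.mem_nhds (hxD t ht))).comp
      (hx' t ht).continuousAt).continuousWithinAt)
    fun s hs t _ hst hVs => hdec x hxD hx' s t hs hst fun h => hVs (by rw [h, hV0])

lemma tendsto_zero_of_strictAntiAlongSolutions (hD : IsOpen D) {K : Set E} (hK : IsCompact K)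
    (hKD : K ⊆ D) (hf : ContinuousOn f K) (hVc : ContinuousOn V D) (hV0 : V 0 = 0)
    (hVpos : ∀ y ∈ D, y ≠ 0 → 0 < V y) (hdec : StrictAntiAlongSolutions f D V) {x : ℝ → E}
    (hxK : ∀ t, 0 ≤ t → x t ∈ K) (hx' : ∀ t, 0 ≤ t → HasDerivAt x (f (x t)) t) :
    Tendsto x atTop (𝓝 0) := by
  have hxD : ∀ t, 0 ≤ t → x t ∈ D := fun t ht => hKD (hxK t ht)
  have hVnn : ∀ t, 0 ≤ t → 0 ≤ V (x t) := fun t ht => by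
    rcases eq_or_ne (x t) 0 with h | h
    · rw [h, hV0]
    · exact (hVpos _ (hxD t ht) h).le
  set c := ⨅ t : Ici (0 : ℝ), V (x t)
  have hc : Tendsto (fun t => V (x t)) atTop (𝓝 c) :=
    (antitoneOn_of_strictAntiAlongSolutions hD hVc hV0 hdec hxD hx').tendsto_atTop_ciInf_Ici
      ⟨0, by rintro _ ⟨t, rfl⟩; exact hVnn t t.2⟩
  have hc0 : c = 0 := by
    refine le_antisymm ?_ (ge_of_tendsto hc ((eventually_ge_atTop 0).mono hVnn))
    by_contra! hcpos
    obtain ⟨y, hyK, hxy, hy'⟩ :=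
      exists_tendsto_shift_solution hK hf hxK hx' (.of atTop) (Ultrafilter.of_le _)
    have hVy : ∀ τ, V (y τ) = c := fun τ =>
      tendsto_nhds_unique ((hVc.continuousAt (hD.mem_nhds (hKD (hyK τ)))).tendsto.comp (hxy τ))
        ((hc.comp (tendsto_atTop_add_const_right _ τ tendsto_id)).mono_left
          (Ultrafilter.of_le _))
    have hy0 : y 0 ≠ 0 := fun h => hcpos.ne (by rw [← hVy 0, h, hV0])
    have := hdec y (fun t _ => hKD (hyK t)) (fun t _ => hy' t) 0 1 le_rfl one_pos hy0
    rw [hVy, hVy] at this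
    exact lt_irrefl c this
  exact tendsto_of_tendsto_comp_zero_of_isCompact hK (hVc.mono hKD)
    (fun y hy => hVpos y (hKD hy)) ((eventually_ge_atTop 0).mono hxK) (hc0 ▸ hc)

end Lyapunov

theorem lyapunov_asymptotic_stability_general {n : ℕ}
    (D : Set (EuclideanSpace ℝ (Fin n))) (hD : IsOpen D) (h0D : (0 : EuclideanSpace ℝ (Fin n)) ∈ D)
    (f : EuclideanSpace ℝ (Fin n) → EuclideanSpace ℝ (Fin n))
    (hfl : ∀ x ∈ D, ∃ (L : NNReal) (U : Set (EuclideanSpace ℝ (Fin n))),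
      U ∈ 𝓝 x ∧ LipschitzOnWith L f U)
    (V : EuclideanSpace ℝ (Fin n) → ℝ)
    (hVc : ContinuousOn V D) (hV0 : V 0 = 0)
    (hVpos : ∀ x ∈ D, x ≠ 0 → 0 < V x)
    (hdec : ∀ x : ℝ → EuclideanSpace ℝ (Fin n),
      (∀ t, 0 ≤ t → x t ∈ D) → (∀ t, 0 ≤ t → HasDerivAt x (f (x t)) t) →
      ∀ s t, 0 ≤ s → s < t → x s ≠ 0 → V (x t) < V (x s)) :
    (∀ ε > (0 : ℝ), ∃ δ > (0 : ℝ),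
      ∀ x : ℝ → EuclideanSpace ℝ (Fin n),
        (∀ t, 0 ≤ t → x t ∈ D) → (∀ t, 0 ≤ t → HasDerivAt x (f (x t)) t) →
        ‖x 0‖ < δ → ∀ t, 0 ≤ t → ‖x t‖ < ε) ∧
    (∃ δ > (0 : ℝ),
      ∀ x : ℝ → EuclideanSpace ℝ (Fin n),
        (∀ t, 0 ≤ t → x t ∈ D) → (∀ t, 0 ≤ t → HasDerivAt x (f (x t)) t) →
        ‖x 0‖ < δ → Tendsto x atTop (𝓝 0)) := by
  obtain ⟨r, hr, hrD⟩ := nhds_basis_closedBall.mem_iff.mp (hD.mem_nhds h0D)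
  have hfc : ContinuousOn f D := fun y hy =>
    let ⟨_, _, hU, hL⟩ := hfl y hy
    (hL.continuousOn.continuousAt hU).continuousWithinAt
  have hstab : ∀ ρ, 0 < ρ → ρ ≤ r → ∃ δ > (0 : ℝ), ∀ x : ℝ → EuclideanSpace ℝ (Fin n),
      (∀ t, 0 ≤ t → x t ∈ D) → (∀ t, 0 ≤ t → HasDerivAt x (f (x t)) t) →
      ‖x 0‖ < δ → ∀ t, 0 ≤ t → ‖x t‖ < ρ := by
    intro ρ hρ hρr
    have hsD : sphere 0 ρ ⊆ D :=
      sphere_subset_closedBall.trans ((closedBall_subset_closedBall hρr).trans hrD)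
    obtain ⟨δ, hδ, h⟩ := exists_forall_norm_lt_of_antitoneOn hρ
      (hVc.continuousAt (hD.mem_nhds h0D)) hV0 (hVc.mono hsD)
      fun y hy => hVpos y (hsD hy) (ne_of_mem_sphere hy hρ.ne')
    exact ⟨δ, hδ, fun x hxD hx' => h x (fun t ht => (hx' t ht).continuousAt.continuousWithinAt)
      (antitoneOn_of_strictAntiAlongSolutions hD hVc hV0 hdec hxD hx')⟩
  refine ⟨fun ε hε => ?_, ?_⟩
  · obtain ⟨δ, hδ, h⟩ := hstab (min ε r) (lt_min hε hr) (min_le_right _ _)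
    exact ⟨δ, hδ, fun x hxD hx' hx0 t ht => (h x hxD hx' hx0 t ht).trans_le (min_le_left _ _)⟩
  · obtain ⟨δ, hδ, h⟩ := hstab r hr le_rfl
    exact ⟨δ, hδ, fun x hxD hx' hx0 =>
      tendsto_zero_of_strictAntiAlongSolutions hD (isCompact_closedBall 0 r) hrD (hfc.mono hrD)
        hVc hV0 hVpos hdec (fun t ht => mem_closedBall_zero_iff.mpr (h x hxD hx' hx0 t ht).le) hx'⟩

/-- Standard (nonsmooth) Lyapunov theorem: if `V` is continuous on an open
neighborhood `D` of `0`, positive definite, and strictly decreasing along every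
nonzero solution of `ẋ = f x` remaining in `D` (with `f` locally Lipschitz on
`D` and `f 0 = 0`), then the origin is asymptotically stable: solutions starting
close enough stay arbitrarily close and converge to `0`. -/
theorem lyapunov_asymptotic_stability {n : ℕ}
    (D : Set (EuclideanSpace ℝ (Fin n))) (hD : IsOpen D) (h0D : (0 : EuclideanSpace ℝ (Fin n)) ∈ D)
    (f : EuclideanSpace ℝ (Fin n) → EuclideanSpace ℝ (Fin n))
    (hf0 : f 0 = 0)
    (hfl : ∀ x ∈ D, ∃ (L : NNReal) (U : Set (EuclideanSpace ℝ (Fin n))),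
      U ∈ 𝓝 x ∧ LipschitzOnWith L f U)
    (V : EuclideanSpace ℝ (Fin n) → ℝ)
    (hVc : ContinuousOn V D) (hV0 : V 0 = 0)
    (hVpos : ∀ x ∈ D, x ≠ 0 → 0 < V x)
    (hdec : ∀ x : ℝ → EuclideanSpace ℝ (Fin n),
      (∀ t, 0 ≤ t → x t ∈ D) → (∀ t, 0 ≤ t → HasDerivAt x (f (x t)) t) →
      ∀ s t, 0 ≤ s → s < t → x s ≠ 0 → V (x t) < V (x s)) :
    (∀ ε > (0 : ℝ), ∃ δ > (0 : ℝ),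
      ∀ x : ℝ → EuclideanSpace ℝ (Fin n),
        (∀ t, 0 ≤ t → x t ∈ D) → (∀ t, 0 ≤ t → HasDerivAt x (f (x t)) t) →
        ‖x 0‖ < δ → ∀ t, 0 ≤ t → ‖x t‖ < ε) ∧
    (∃ δ > (0 : ℝ),
      ∀ x : ℝ → EuclideanSpace ℝ (Fin n),
        (∀ t, 0 ≤ t → x t ∈ D) → (∀ t, 0 ≤ t → HasDerivAt x (f (x t)) t) →
        ‖x 0‖ < δ → Tendsto x atTop (𝓝 0)) :=
  lyapunov_asymptotic_stability_general D hD h0D f hfl V hVc hV0 hVpos hdec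
end
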